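/- arXiv:1712.04896 — 2 statements merged into one kernel-verified Lean document; each statement's English description precedes it below -/
import Mathlib

section
/- Every vectorially ext. one convex function f : Λ^{k_1}(ℝⁿ) × … × Λ^{k_m}(ℝⁿ) → ℝ is locally Lipschitz. -/
open MeasureTheory Filter Topology
open scoped ENNReal

noncomputable section

/-- Euclidean `n`-space `ℝⁿ`. -/
abbrev Rn (n : ℕ) := EuclideanSpace ℝ (Fin n)

/-- Index type for the coordinates of `Λᵏ(ℝⁿ)` : `k`-element subsets of `{0,…,n-1}`. -/
abbrev IdxSet (n k : ℕ) := {s : Finset (Fin n) // s.card = k}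

/-- The space `Λᵏ(ℝⁿ)` of alternating `k`-linear maps on `ℝⁿ`, in coordinates. -/
abbrev Lam (n k : ℕ) := IdxSet n k → ℝ

/-- The euclidean scalar product `⟨·;·⟩` on `Λᵏ(ℝⁿ)`. -/
def dotL {n k : ℕ} (x y : Lam n k) : ℝ := ∑ S, x S * y S

/-- The euclidean norm `|·|` on `Λᵏ(ℝⁿ)`. -/
def nL {n k : ℕ} (x : Lam n k) : ℝ := Real.sqrt (∑ S, x S ^ 2)

/-- The sign of the shuffle putting `A ∪ B` in increasing order, `A` before `B`. -/
def interSign {n : ℕ} (A B : Finset (Fin n)) : ℝ :=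
  (-1 : ℝ) ^ ((A ×ˢ B).filter fun p => p.2 < p.1).card

/-- The wedge (exterior) product `Λᵏ × Λˡ → Λ^{k+l}`. -/
def wedge {n k l : ℕ} (ξ : Lam n k) (η : Lam n l) : Lam n (k + l) := fun S =>
  ∑ A ∈ S.1.powerset.attach,
    if hA : A.1.card = k then
      interSign A.1 (S.1 \ A.1) * ξ ⟨A.1, hA⟩ *
        η ⟨S.1 \ A.1, by
          rw [Finset.card_sdiff_of_subset (Finset.mem_powerset.mp A.2), S.2, hA]; omega⟩
    else 0

/-- Transport along an equality of degrees. -/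
def lamCast {n k l : ℕ} (h : k = l) (ξ : Lam n k) : Lam n l := fun S => ξ ⟨S.1, by rw [S.2, h]⟩

/-- The wedge power `ξ^a = ξ ∧ ⋯ ∧ ξ` (`a` times). -/
def wpow {n k : ℕ} (ξ : Lam n k) : (a : ℕ) → Lam n (k * a)
  | 0 => fun _ => 1
  | a + 1 => wedge (wpow ξ a) ξ

/-- The wedge product of a finite family of forms. -/
def wprod {n : ℕ} : {m : ℕ} → (d : Fin m → ℕ) → ((i : Fin m) → Lam n (d i)) → Lam n (∑ i, d i)
  | 0, _, _ => lamCast (by simp) ((fun _ => (1 : ℝ)) : Lam n 0)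
  | _ + 1, d, ξ =>
      lamCast (Fin.sum_univ_succ d).symm
        (wedge (ξ 0) (wprod (fun i => d i.succ) fun i => ξ i.succ))

/-- `ξ^α = ξ₁^{α₁} ∧ ⋯ ∧ ξ_m^{α_m}`. -/
def wpowProd {n m : ℕ} (k : Fin m → ℕ) (ξ : (i : Fin m) → Lam n (k i)) (α : Fin m → ℕ) :
    Lam n (∑ i, k i * α i) :=
  wprod (fun i => k i * α i) fun i => wpow (ξ i) (α i)

/-- sign of inserting `i` into `S`. -/
def epsSign {n : ℕ} (i : Fin n) (S : Finset (Fin n)) : ℝ :=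
  (-1 : ℝ) ^ (S.filter fun j => j < i).card

/-- `i`-th partial derivative of a scalar function on `ℝⁿ`. -/
def pd {n : ℕ} (i : Fin n) (ψ : Rn n → ℝ) (x : Rn n) : ℝ :=
  fderiv ℝ ψ x (EuclideanSpace.single i 1)

/-- Test functions for distributions on `Ω`: smooth, compactly supported in `Ω`. -/
def IsTest {n : ℕ} (Ω : Set (Rn n)) (ψ : Rn n → ℝ) : Prop :=
  ContDiff ℝ (⊤ : ℕ∞) ψ ∧ HasCompactSupport ψ ∧ tsupport ψ ⊆ Ω

/-- `v` is the distributional exterior derivative of the `(j-1)`-form field `ω` on `Ω`. -/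
def IsWED {n : ℕ} (Ω : Set (Rn n)) {j : ℕ} (ω : Rn n → Lam n (j - 1)) (v : Rn n → Lam n j) :
    Prop :=
  ∀ (S : IdxSet n j) (ψ : Rn n → ℝ), IsTest Ω ψ →
    ∫ x in Ω, v x S * ψ x =
      - ∑ i ∈ S.1.attach,
          epsSign i.1 S.1 *
            ∫ x in Ω,
              ω x ⟨S.1.erase i.1, by rw [Finset.card_erase_of_mem i.2, S.2]⟩ * pd i.1 ψ x

/-- `v = dω` weakly on `Ω` together with vanishing tangential trace `ν ∧ ω = 0` on `∂Ω`:
integration by parts holds with no boundary term against all smooth test functions (not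
necessarily compactly supported). -/
def IsWEDT {n : ℕ} (Ω : Set (Rn n)) {j : ℕ} (ω : Rn n → Lam n (j - 1)) (v : Rn n → Lam n j) :
    Prop :=
  ∀ (S : IdxSet n j) (ψ : Rn n → ℝ), ContDiff ℝ (⊤ : ℕ∞) ψ →
    ∫ x in Ω, v x S * ψ x =
      - ∑ i ∈ S.1.attach,
          epsSign i.1 S.1 *
            ∫ x in Ω,
              ω x ⟨S.1.erase i.1, by rw [Finset.card_erase_of_mem i.2, S.2]⟩ * pd i.1 ψ x

/-- The exterior derivative of a `(j-1)`-form field expressed through the (weak) partial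
derivatives `D` of its components. -/
def extDerivOf {n : ℕ} {j : ℕ} (D : Fin n → Rn n → Lam n (j - 1)) : Rn n → Lam n j :=
  fun x S =>
    ∑ i ∈ S.1.attach,
      epsSign i.1 S.1 * D i.1 x ⟨S.1.erase i.1, by rw [Finset.card_erase_of_mem i.2, S.2]⟩

/-- The (classical) exterior derivative of a smooth `(j-1)`-form field. -/
def smoothExtD {n : ℕ} {j : ℕ} (φ : Rn n → Lam n (j - 1)) : Rn n → Lam n j :=
  fun x S =>
    ∑ i ∈ S.1.attach,
      epsSign i.1 S.1 *
        fderiv ℝ (fun y => φ y ⟨S.1.erase i.1, by rw [Finset.card_erase_of_mem i.2, S.2]⟩) x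
          (EuclideanSpace.single i.1 1)

/-- `dω = 0` in the sense of distributions on `Ω`. -/
def WeakClosed {n : ℕ} {j : ℕ} (Ω : Set (Rn n)) (ω : Rn n → Lam n j) : Prop :=
  IsWED (j := j + 1) Ω ω fun _ => (0 : Lam n (j + 1))

/-- `δω = 0` in the sense of distributions on `Ω`:
`∫ ⟨ω, dφ⟩ = 0` for every smooth compactly supported `(j-1)`-form field `φ`. -/
def WeakCoclosed {n : ℕ} {j : ℕ} (Ω : Set (Rn n)) (ω : Rn n → Lam n j) : Prop :=
  ∀ φ : Rn n → Lam n (j - 1), ContDiff ℝ (⊤ : ℕ∞) φ → HasCompactSupport φ → tsupport φ ⊆ Ω →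
    ∫ x in Ω, dotL (ω x) (smoothExtD (j := j) φ x) = 0

/-- The conjugate Hölder exponent. -/
def conjExp (p : ℝ≥0∞) : ℝ≥0∞ :=
  if p = ∞ then 1 else if p = 1 then ∞ else ENNReal.ofReal (p.toReal / (p.toReal - 1))

/-- Weak convergence (weak-* if `p = ∞`) of a sequence in `L^p(Ω; Λᵏ)`:
the sequence and the limit belong to `L^p` and the integrals against every element of the
conjugate Lebesgue space converge. -/
def WeakLp {n j : ℕ} (Ω : Set (Rn n)) (p : ℝ≥0∞) (F : ℕ → Rn n → Lam n j)
    (f : Rn n → Lam n j) : Prop :=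
  (∀ ν, MemLp (F ν) p (volume.restrict Ω)) ∧ MemLp f p (volume.restrict Ω) ∧
    ∀ g : Rn n → Lam n j, MemLp g (conjExp p) (volume.restrict Ω) →
      Tendsto (fun ν => ∫ x in Ω, dotL (F ν x) (g x)) atTop
        (𝓝 (∫ x in Ω, dotL (f x) (g x)))

/-- `v` is the `i`-th weak partial derivative of `u` on `Ω`. -/
def IsWeakPartial {n : ℕ} {E : Type*} [NormedAddCommGroup E] [NormedSpace ℝ E]
    (Ω : Set (Rn n)) (i : Fin n) (u v : Rn n → E) : Prop :=
  ∀ ψ : Rn n → ℝ, IsTest Ω ψ → ∫ x in Ω, ψ x • v x = - ∫ x in Ω, pd i ψ x • u x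

/-- Membership in the Sobolev space `W^{1,p}(Ω; E)`, with weak partial derivatives `D`. -/
def MemW1p {n : ℕ} {E : Type*} [NormedAddCommGroup E] [NormedSpace ℝ E] (Ω : Set (Rn n))
    (p : ℝ≥0∞) (u : Rn n → E) (D : Fin n → Rn n → E) : Prop :=
  MemLp u p (volume.restrict Ω) ∧
    ∀ i, IsWeakPartial Ω i u (D i) ∧ MemLp (D i) p (volume.restrict Ω)

/-- Membership in `W₀^{1,p}(Ω; E)` (zero boundary values): the extension of `u` by zero
belongs to `W^{1,p}(ℝⁿ; E)`. -/
def MemW1p0 {n : ℕ} {E : Type*} [NormedAddCommGroup E] [NormedSpace ℝ E] (Ω : Set (Rn n))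
    (p : ℝ≥0∞) (u : Rn n → E) (D : Fin n → Rn n → E) : Prop :=
  MemW1p Ω p u D ∧ (∀ x ∉ Ω, u x = 0) ∧
    ∀ i, (∀ x ∉ Ω, D i x = 0) ∧ IsWeakPartial Set.univ i u (D i)

/-- A bounded open set with smooth boundary, via local smooth defining functions. -/
def IsSmoothDomain {n : ℕ} (Ω : Set (Rn n)) : Prop :=
  ∀ x ∈ frontier Ω, ∃ (U : Set (Rn n)) (ρ : Rn n → ℝ), IsOpen U ∧ x ∈ U ∧
    ContDiff ℝ (⊤ : ℕ∞) ρ ∧ (∀ y ∈ U, (y ∈ Ω ↔ ρ y < 0)) ∧ ∀ y ∈ U, fderiv ℝ ρ y ≠ 0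

/-- Vectorial ext. one convexity. -/
def VOneConvex {n m : ℕ} (k : Fin m → ℕ) (f : ((i : Fin m) → Lam n (k i + 1)) → ℝ) : Prop :=
  ∀ (ξ : (i : Fin m) → Lam n (k i + 1)) (a : Lam n 1) (b : (i : Fin m) → Lam n (k i)),
    ConvexOn ℝ Set.univ fun t : ℝ =>
      f fun i => ξ i + t • lamCast (Nat.add_comm 1 (k i)) (wedge a (b i))

/-- Vectorial ext. one affinity. -/
def VOneAffine {n m : ℕ} (k : Fin m → ℕ) (f : ((i : Fin m) → Lam n (k i + 1)) → ℝ) : Prop :=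
  ∀ (ξ : (i : Fin m) → Lam n (k i + 1)) (a : Lam n 1) (b : (i : Fin m) → Lam n (k i)),
    ∃ c d : ℝ, ∀ t : ℝ,
      f (fun i => ξ i + t • lamCast (Nat.add_comm 1 (k i)) (wedge a (b i))) = c + d * t

/-- Vectorial ext. quasiconvexity. -/
def VQuasiconvex {n m : ℕ} (k : Fin m → ℕ) (f : ((i : Fin m) → Lam n (k i + 1)) → ℝ) : Prop :=
  ∀ (Ω : Set (Rn n)), IsOpen Ω → Bornology.IsBounded Ω → Ω.Nonempty →
    ∀ (ξ : (i : Fin m) → Lam n (k i + 1)) (ω : (i : Fin m) → Rn n → Lam n (k i))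
      (v : (i : Fin m) → Rn n → Lam n (k i + 1)),
      (∀ i, ∃ C, LipschitzWith C (ω i)) → (∀ i, ∀ x ∉ Ω, ω i x = 0) →
      (∀ i, IsWED (j := k i + 1) Ω (ω i) (v i)) →
      (∀ i, MemLp (v i) ∞ (volume.restrict Ω)) →
      f ξ * (volume Ω).toReal ≤ ∫ x in Ω, f fun i => ξ i + v i x

/-- Vectorial ext. quasiaffinity. -/
def VQuasiaffine {n m : ℕ} (k : Fin m → ℕ) (f : ((i : Fin m) → Lam n (k i + 1)) → ℝ) : Prop :=
  ∀ (Ω : Set (Rn n)), IsOpen Ω → Bornology.IsBounded Ω → Ω.Nonempty →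
    ∀ (ξ : (i : Fin m) → Lam n (k i + 1)) (ω : (i : Fin m) → Rn n → Lam n (k i))
      (v : (i : Fin m) → Rn n → Lam n (k i + 1)),
      (∀ i, ∃ C, LipschitzWith C (ω i)) → (∀ i, ∀ x ∉ Ω, ω i x = 0) →
      (∀ i, IsWED (j := k i + 1) Ω (ω i) (v i)) →
      (∀ i, MemLp (v i) ∞ (volume.restrict Ω)) →
      (∫ x in Ω, f fun i => ξ i + v i x) = f ξ * (volume Ω).toReal

/-- Multiindices `α` with `1 ≤ |kα| ≤ n` (degrees of the nontrivial wedge powers). -/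
abbrev MIdx (n m : ℕ) (k : Fin m → ℕ) :=
  {α : Fin m → Fin (n + 1) //
    1 ≤ ∑ i, (k i + 1) * (α i : ℕ) ∧ ∑ i, (k i + 1) * (α i : ℕ) ≤ n}

/-- Multiindices `α` with `0 ≤ |kα| ≤ n`. -/
abbrev MIdx0 (n m : ℕ) (k : Fin m → ℕ) :=
  {α : Fin m → Fin (n + 1) // ∑ i, (k i + 1) * (α i : ℕ) ≤ n}

/-- The target space of the map `T`. -/
abbrev TSpace (n m : ℕ) (k : Fin m → ℕ) :=
  (α : MIdx n m k) → Lam n (∑ i, (k i + 1) * (α.1 i : ℕ))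

/-- `T(ξ)`, the vector of all nontrivial wedge powers of `ξ`. -/
def Tvec {n m : ℕ} (k : Fin m → ℕ) (ξ : (i : Fin m) → Lam n (k i + 1)) : TSpace n m k :=
  fun α => wpowProd (fun i => k i + 1) ξ fun i => (α.1 i : ℕ)

/-- Vectorial ext. polyconvexity. -/
def VPolyconvex {n m : ℕ} (k : Fin m → ℕ) (f : ((i : Fin m) → Lam n (k i + 1)) → ℝ) : Prop :=
  ∃ F : TSpace n m k → ℝ, ConvexOn ℝ Set.univ F ∧ ∀ ξ, f ξ = F (Tvec k ξ)

/-- Vectorial ext. polyaffinity. -/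
def VPolyaffine {n m : ℕ} (k : Fin m → ℕ) (f : ((i : Fin m) → Lam n (k i + 1)) → ℝ) : Prop :=
  ∃ (c : ℝ) (L : TSpace n m k →ₗ[ℝ] ℝ), ∀ ξ, f ξ = c + L (Tvec k ξ)

/-- Separate convexity: convexity in each scalar component. -/
def SepConvex {n m : ℕ} {d : Fin m → ℕ} (f : ((i : Fin m) → Lam n (d i)) → ℝ) : Prop :=
  ∀ (ξ : (i : Fin m) → Lam n (d i)) (i : Fin m) (S : IdxSet n (d i)),
    ConvexOn ℝ Set.univ fun t : ℝ => f (Function.update ξ i (Function.update (ξ i) S t))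

/-- Equiintegrability of a family of functions over `Ω`. -/
def EquiInt {n : ℕ} (Ω : Set (Rn n)) (F : ℕ → Rn n → ℝ) : Prop :=
  ∀ ε > (0 : ℝ), ∃ δ > (0 : ℝ), ∀ A : Set (Rn n), MeasurableSet A →
    volume A ≤ ENNReal.ofReal δ → ∀ s, ∫ x in A ∩ Ω, |F s x| ≤ ε

/-- Admissible lower growth function for exponent `p` (growth condition `(C_p)`). -/
def LowerCtrl {n j : ℕ} (p : ℝ≥0∞) (G : Lam n j → ℝ) : Prop :=
  (p = 1 ∧ ∃ a : ℝ, 0 ≤ a ∧ ∀ ξ, G ξ = a * nL ξ) ∨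
  (1 < p ∧ p ≠ ∞ ∧ ∃ a q : ℝ, 0 ≤ a ∧ 1 ≤ q ∧ q < p.toReal ∧ ∀ ξ, G ξ = a * nL ξ ^ q) ∨
  (p = ∞ ∧ ∃ η : ℝ → ℝ, (∀ t, 0 ≤ η t) ∧ Continuous η ∧ Monotone η ∧ ∀ ξ, G ξ = η (nL ξ))

/-- Admissible upper growth function for exponent `p` (growth condition `(C_p)`). -/
def UpperCtrl {n j : ℕ} (p : ℝ≥0∞) (G : Lam n j → ℝ) : Prop :=
  (p = 1 ∧ ∃ a : ℝ, 0 ≤ a ∧ ∀ ξ, G ξ = a * nL ξ) ∨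
  (1 < p ∧ p ≠ ∞ ∧ ∃ a : ℝ, 0 ≤ a ∧ ∀ ξ, G ξ = a * nL ξ ^ p.toReal) ∨
  (p = ∞ ∧ ∃ η : ℝ → ℝ, (∀ t, 0 ≤ η t) ∧ Continuous η ∧ Monotone η ∧ ∀ ξ, G ξ = η (nL ξ))

/-- The growth condition `(C_𝐩)`. -/
def GrowthCp {n m : ℕ} (k : Fin m → ℕ) (p : Fin m → ℝ≥0∞)
    (f : ((i : Fin m) → Lam n (k i + 1)) → ℝ) : Prop :=
  ∃ (a : ℝ) (Gl Gu : (i : Fin m) → Lam n (k i + 1) → ℝ), 0 < a ∧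
    (∀ i, LowerCtrl (p i) (Gl i)) ∧ (∀ i, UpperCtrl (p i) (Gu i)) ∧
    ∀ ξ, -(a * (1 + ∑ i, Gl i (ξ i))) ≤ f ξ ∧ f ξ ≤ a * (1 + ∑ i, Gu i (ξ i))

/-!
A coordinate vector `e_S` of `Λ^{k+1}` factors as `e_{s₀} ∧ e_{S ∖ {s₀}}` with `s₀ = min S`
(no reordering sign), so ext. one convexity contains convexity in every scalar coordinate:
`f` is separately convex. A separately convex function on `ℝ^N` is locally Lipschitz. On a cube
it is bounded above by its values at the vertices (convexity in one coordinate at a time), and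
bounded below by reflecting one coordinate at a time through the centre. The one-dimensional
Lipschitz estimate for bounded convex functions then applies on every coordinate line, and
changing one coordinate at a time gives a Lipschitz bound in the sup norm.
-/

open Function Metric Set

section SeparatelyConvex

variable {ι : Type*} [Fintype ι] [DecidableEq ι]

def SeparatelyConvex (g : (ι → ℝ) → ℝ) : Prop :=
  ∀ x j, ConvexOn ℝ univ fun t => g (update x j t)

theorem update_mem_closedBall {X : ι → Type*} [∀ j, PseudoMetricSpace (X j)]
    {x₀ y : ∀ j, X j} {r : ℝ} {j : ι} {t : X j} (hy : y ∈ closedBall x₀ r)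
    (ht : dist t (x₀ j) ≤ r) : update y j t ∈ closedBall x₀ r := by
  have hr : 0 ≤ r := dist_nonneg.trans hy
  rw [closedBall_pi _ hr] at hy ⊢
  exact (update_mem_pi_iff_of_mem hy).2 fun _ => ht

theorem LipschitzOnWith.of_forall_update {α β : Type*} [PseudoMetricSpace α]
    [PseudoMetricSpace β] {g : (ι → α) → β} {t : ι → Set α} {K : NNReal}
    (h : ∀ y ∈ univ.pi t, ∀ j, LipschitzOnWith K (fun u => g (update y j u)) (t j)) :
    LipschitzOnWith (Fintype.card ι * K) g (univ.pi t) := by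
  refine .of_dist_le_mul fun z hz y hy => ?_
  suffices ∀ s : Finset ι, dist (g (s.piecewise z y)) (g y) ≤ s.card * K * dist z y by
    simpa using this Finset.univ
  intro s
  induction s using Finset.induction_on with
  | empty => simp
  | insert j s hj ih =>
    set w := s.piecewise z y
    have hw : w ∈ univ.pi t := Finset.piecewise_mem_set_pi s hz hy
    have hstep : dist (g (update w j (z j))) (g w) ≤ K * dist z y := by
      have := (h w hw j).dist_le_mul (z j) (hz j trivial) (w j) (hw j trivial)
      have hwj : w j = y j := Finset.piecewise_eq_of_notMem s z y hj
      rw [update_eq_self, hwj] at this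
      exact this.trans (mul_le_mul_of_nonneg_left (dist_le_pi_dist z y j) K.2)
    rw [Finset.piecewise_insert, Finset.card_insert_of_notMem hj]
    calc dist (g (update w j (z j))) (g y)
        ≤ dist (g (update w j (z j))) (g w) + dist (g w) (g y) := dist_triangle _ _ _
      _ ≤ K * dist z y + s.card * K * dist z y := add_le_add hstep ih
      _ = ↑(s.card + 1) * K * dist z y := by push_cast; ring

variable {g : (ι → ℝ) → ℝ}

theorem SeparatelyConvex.bddAbove_image_pi_Icc (hg : SeparatelyConvex g) (a b : ι → ℝ) :
    BddAbove (g '' univ.pi fun j => Icc (a j) (b j)) := by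
  set V := Fintype.piFinset fun j => ({a j, b j} : Finset ℝ)
  have hV : V.Nonempty := ⟨a, Fintype.mem_piFinset.2 fun j => Finset.mem_insert_self _ _⟩
  refine ⟨V.sup' hV g, forall_mem_image.2 ?_⟩
  suffices ∀ s : Finset ι, ∀ y ∈ univ.pi (fun j => Icc (a j) (b j)),
      (∀ j ∉ s, y j = a j ∨ y j = b j) → g y ≤ V.sup' hV g from
    fun y hy => this Finset.univ y hy (by simp)
  intro s
  induction s using Finset.induction_on with
  | empty =>
    intro y _ hvert
    exact V.le_sup' g (Fintype.mem_piFinset.2 fun j => by simpa using hvert j (by simp))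
  | insert j s hj ih =>
    intro y hy hvert
    obtain ⟨hay, hyb⟩ := hy j trivial
    have hend : ∀ c, c = a j ∨ c = b j → g (update y j c) ≤ V.sup' hV g := by
      intro c hc
      refine ih _ ((update_mem_pi_iff_of_mem hy).2 fun _ => ?_) fun i hi => ?_
      · rcases hc with rfl | rfl
        · exact ⟨le_rfl, hay.trans hyb⟩
        · exact ⟨hay.trans hyb, le_rfl⟩
      · rcases eq_or_ne i j with rfl | hij
        · simpa using hc
        · simpa [hij] using hvert i (by simp [hij, hi])
    calc g y ≤ max (g (update y j (a j))) (g (update y j (b j))) := by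
          simpa using (hg y j).le_on_segment (mem_univ _) (mem_univ _)
            (Icc_subset_segment ⟨hay, hyb⟩)
      _ ≤ V.sup' hV g := max_le (hend _ (.inl rfl)) (hend _ (.inr rfl))

theorem SeparatelyConvex.bddBelow_image_closedBall (hg : SeparatelyConvex g) {x₀ : ι → ℝ}
    {r : ℝ} (h : BddAbove (g '' closedBall x₀ r)) : BddBelow (g '' closedBall x₀ r) := by
  obtain ⟨M, hM⟩ := h
  rw [mem_upperBounds, forall_mem_image] at hM
  refine ⟨2 ^ Fintype.card ι * (g x₀ - M) + M, forall_mem_image.2 ?_⟩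
  suffices ∀ s : Finset ι, ∀ y ∈ closedBall x₀ r, (∀ j ∉ s, y j = x₀ j) →
      2 ^ s.card * (g x₀ - M) + M ≤ g y from
    fun y hy => this Finset.univ y hy (by simp)
  intro s
  induction s using Finset.induction_on with
  | empty =>
    intro y _ hy
    simp [funext fun j => hy j (Finset.notMem_empty j)]
  | insert j s hj ih =>
    intro y hy hys
    have hcenter := ih (update y j (x₀ j))
      (update_mem_closedBall hy (by simpa using dist_nonneg.trans hy)) fun i hi => by
        rcases eq_or_ne i j with rfl | hij
        · simp
        · simpa [hij] using hys i (by simp [hij, hi])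
    have hreflect : g (update y j (2 * x₀ j - y j)) ≤ M := by
      refine hM (update_mem_closedBall hy ?_)
      rw [Real.dist_eq, show 2 * x₀ j - y j - x₀ j = -(y j - x₀ j) by ring, abs_neg,
        ← Real.dist_eq]
      exact (dist_le_pi_dist y x₀ j).trans hy
    have hmid : g (update y j (x₀ j)) ≤
        (1 / 2) * g y + (1 / 2) * g (update y j (2 * x₀ j - y j)) := by
      have := (hg y j).2 (mem_univ (y j)) (mem_univ (2 * x₀ j - y j))
        (by norm_num : (0 : ℝ) ≤ 1 / 2) (by norm_num : (0 : ℝ) ≤ 1 / 2) (by norm_num)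
      simp only [smul_eq_mul, update_eq_self] at this
      rwa [show 1 / 2 * y j + 1 / 2 * (2 * x₀ j - y j) = x₀ j by ring] at this
    rw [Finset.card_insert_of_notMem hj, pow_succ]
    linarith

theorem SeparatelyConvex.isBounded_image_closedBall (hg : SeparatelyConvex g) (x₀ : ι → ℝ)
    (r : ℝ) : Bornology.IsBounded (g '' closedBall x₀ r) := by
  have hsub : closedBall x₀ r ⊆ univ.pi fun j => Icc (x₀ j - r) (x₀ j + r) :=
    fun y hy j _ => by
      show y j ∈ Icc _ _
      rw [← Real.closedBall_eq_Icc]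
      exact (dist_le_pi_dist y x₀ j).trans hy
  have hbdd := (hg.bddAbove_image_pi_Icc _ _).mono (image_mono hsub)
  exact isBounded_iff_bddBelow_bddAbove.2 ⟨hg.bddBelow_image_closedBall hbdd, hbdd⟩

theorem SeparatelyConvex.locallyLipschitz (hg : SeparatelyConvex g) : LocallyLipschitz g := by
  intro x₀
  obtain ⟨B, hB⟩ := isBounded_iff_forall_norm_le.1 (hg.isBounded_image_closedBall x₀ 2)
  rw [forall_mem_image, closedBall_pi x₀ zero_le_two] at hB
  simp only [Real.norm_eq_abs] at hB
  refine ⟨Fintype.card ι * (2 * B).toNNReal, ball x₀ 1, ball_mem_nhds x₀ one_pos, ?_⟩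
  rw [ball_pi x₀ one_pos]
  refine LipschitzOnWith.of_forall_update fun y hy j => ?_
  have hy2 : y ∈ univ.pi fun j => closedBall (x₀ j) 2 := fun i _ =>
    ball_subset_closedBall (ball_subset_ball one_le_two (hy i trivial))
  have hline := ((hg y j).subset (subset_univ _) (convex_ball (x₀ j) 2)).lipschitzOnWith_of_abs_le
    one_pos fun t ht => hB ((update_mem_pi_iff_of_mem hy2).2 fun _ => le_of_lt ht)
  rwa [div_one, show (2 : ℝ) - 1 = 1 by norm_num] at hline

end SeparatelyConvex

section ExteriorAlgebra

variable {n : ℕ}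

theorem interSign_singleton_eq_one {s₀ : Fin n} {B : Finset (Fin n)}
    (hB : ∀ j ∈ B, s₀ < j) : interSign {s₀} B = 1 := by
  rw [interSign, Finset.filter_eq_empty_iff.2, Finset.card_empty, pow_zero]
  rintro ⟨a, b⟩ hab
  rw [Finset.mem_product, Finset.mem_singleton] at hab
  rw [hab.1, not_lt]
  exact (hB b hab.2).le

theorem wedge_zero_right {k l : ℕ} (ξ : Lam n k) : wedge ξ (0 : Lam n l) = 0 := by
  funext S
  refine Finset.sum_eq_zero fun A _ => ?_
  split_ifs <;> simp

theorem lamCast_wedge_single_single {l : ℕ} {s₀ : Fin n} {B : IdxSet n l}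
    (hB : ∀ j ∈ B.1, s₀ < j) :
    lamCast (Nat.add_comm 1 l) (wedge (Pi.single ⟨{s₀}, Finset.card_singleton s₀⟩ 1)
        (Pi.single B 1)) =
      Pi.single ⟨insert s₀ B.1, by
        rw [Finset.card_insert_of_notMem fun h => (hB s₀ h).false, B.2]⟩ (1 : ℝ) := by
  have hs₀B : s₀ ∉ B.1 := fun h => (hB s₀ h).false
  funext T
  simp only [lamCast, wedge, Pi.single_apply, Subtype.ext_iff]
  by_cases hT : T.1 = insert s₀ B.1
  · have hsub : {s₀} ⊆ T.1 := by simp [hT]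
    have hsdiff : T.1 \ {s₀} = B.1 := by
      rw [hT, Finset.insert_sdiff_of_mem _ (Finset.mem_singleton_self _),
        Finset.sdiff_singleton_eq_erase, Finset.erase_eq_of_notMem hs₀B]
    rw [if_pos hT, Finset.sum_eq_single_of_mem ⟨{s₀}, Finset.mem_powerset.2 hsub⟩
      (Finset.mem_attach _ _)]
    · simp [hsdiff, interSign_singleton_eq_one hB]
    · rintro A - hA
      split_ifs with h1 h2
      · exact absurd (Subtype.ext h2) hA
      all_goals simp
  · rw [if_neg hT]
    refine Finset.sum_eq_zero fun A _ => ?_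
    split_ifs with h1 h2 h3
    · refine absurd ?_ hT
      have hs₀T : s₀ ∈ T.1 := Finset.singleton_subset_iff.1 (h2 ▸ Finset.mem_powerset.1 A.2)
      rw [← h3, h2, Finset.sdiff_singleton_eq_erase, Finset.insert_erase hs₀T]
    all_goals simp

theorem exists_lamCast_wedge_eq_single {l : ℕ} (S : IdxSet n (l + 1)) :
    ∃ (a : Lam n 1) (b : Lam n l), lamCast (Nat.add_comm 1 l) (wedge a b) = Pi.single S 1 := by
  have hS : S.1.Nonempty := Finset.card_pos.1 (by rw [S.2]; omega)
  set s₀ := S.1.min' hS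
  have hB : (S.1.erase s₀).card = l := by
    rw [Finset.card_erase_of_mem (S.1.min'_mem hS), S.2, Nat.add_sub_cancel]
  refine ⟨_, _, (lamCast_wedge_single_single (B := ⟨S.1.erase s₀, hB⟩)
    fun j hj => S.1.min'_lt_of_mem_erase_min' hS hj).trans ?_⟩
  congr 1
  exact Subtype.ext (Finset.insert_erase (S.1.min'_mem hS))

end ExteriorAlgebra

theorem VOneConvex.sepConvex {n m : ℕ} {k : Fin m → ℕ}
    {f : ((i : Fin m) → Lam n (k i + 1)) → ℝ} (hf : VOneConvex k f) :
    SepConvex (d := fun i => k i + 1) f := by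
  intro ξ i S
  obtain ⟨a, b, hab⟩ := exists_lamCast_wedge_eq_single S
  set v : (i : Fin m) → Lam n (k i + 1) := Pi.single i (Pi.single S 1)
  set w : (i : Fin m) → Lam n (k i) := Pi.single i b
  have hv : (fun i' => lamCast (Nat.add_comm 1 (k i')) (wedge a (w i'))) = v := by
    funext i'
    rw [Pi.apply_single (fun i' b => lamCast (Nat.add_comm 1 (k i')) (wedge a b))
      (fun i' => by rw [wedge_zero_right]; rfl), hab]
  have hupdate : ∀ t : ℝ, update ξ i (update (ξ i) S t) = (ξ - ξ i S • v) + t • v := by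
    intro t
    ext i' T
    rcases eq_or_ne i' i with rfl | hi
    · rcases eq_or_ne T S with rfl | hT
      · simp [v]
      · simp [v, hT]
    · simp [v, hi]
  refine (hf (ξ - ξ i S • v) a w).congr fun t _ => ?_
  rw [hupdate, ← hv]
  rfl

theorem SepConvex.locallyLipschitz {n m : ℕ} {d : Fin m → ℕ}
    {f : ((i : Fin m) → Lam n (d i)) → ℝ} (hf : SepConvex f) : LocallyLipschitz f := by
  have hg : SeparatelyConvex fun x : (Σ i, IdxSet n (d i)) → ℝ => f (Sigma.curry x) :=
    fun x p => by simpa only [Sigma.curry_update] using hf (Sigma.curry x) p.1 p.2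
  have huncurry : LipschitzWith 1 (Sigma.uncurry : ((i : Fin m) → Lam n (d i)) → _) :=
    .of_dist_le_mul fun ξ η => by
      rw [NNReal.coe_one, one_mul, dist_pi_le_iff dist_nonneg]
      exact fun p => (dist_le_pi_dist (ξ p.1) (η p.1) p.2).trans (dist_le_pi_dist ξ η p.1)
  exact hg.locallyLipschitz.comp huncurry.locallyLipschitz

theorem stmt2_general {n m : ℕ} (k : Fin m → ℕ)
    (f : ((i : Fin m) → Lam n (k i + 1)) → ℝ) (hf : VOneConvex k f) :
    LocallyLipschitz f :=
  hf.sepConvex.locallyLipschitz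

/-- Every vectorially ext. one convex function is locally Lipschitz. -/
theorem stmt2 {n m : ℕ} (hm : 1 ≤ m) (k : Fin m → ℕ) (hk : ∀ i, k i + 1 ≤ n)
    (f : ((i : Fin m) → Lam n (k i + 1)) → ℝ) (hf : VOneConvex k f) :
    LocallyLipschitz f :=
  stmt2_general k f hf

end
end

section
/- Let 𝐩 = (p_1,…,p_m) with 1 ≤ p_i < ∞ for all i. Let f : Λ^{𝐤} → ℝ be separately convex and satisfy |f(ξ)| ≤ α(1 + Σ_{i=1}^m |ξ_i|^{p_i}) for all ξ ∈ Λ^{𝐤}, where α > 0. Then there exist constants β_i > 0, i = 1,…,m, such that for all ξ, ζ ∈ Λ^{𝐤}: |f(ξ) − f(ζ)| ≤ Σ_{i=1}^m β_i ( 1 + Σ_{j=1}^m ( |ξ_j|^{p_j/p_i'} + |ζ_j|^{p_j/p_i'} ) ) |ξ_i − ζ_i|, where p_i' = p_i/(p_i − 1) is the Hölder conjugate of p_i (so p_j/p_i' = p_j(p_i−1)/p_i, interpreted as 0 when p_i = 1). -/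
open MeasureTheory Filter Topology
open scoped ENNReal

noncomputable section

/-!
Fix `ξ, ζ` and put `R = 1 + ∑ⱼ (|ξⱼ|^{pⱼ} + |ζⱼ|^{pⱼ})` and `rᵢ = R^{1/pᵢ}`, so that
`|ξᵢ|, |ζᵢ| ≤ rᵢ`. Pass from `ζ` to `ξ` one scalar coordinate at a time, through points whose
coordinates are each taken from `ξ` or `ζ`. Along the line of the coordinate `(i, S)`, `f` is
convex, and for parameters in `(-3rᵢ, 3rᵢ)` every block of the point has norm at most `5 rⱼ`, so
the growth bound gives `|f| ≤ M = α (1 + ∑ⱼ 5^{pⱼ}) R` there. A convex function bounded by `M`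
on an interval is `2M/rᵢ`-Lipschitz on the interval shrunk by `rᵢ`, so the step costs
`2M/rᵢ · |ξᵢₛ - ζᵢₛ|`, and `R / rᵢ = R^{1/pᵢ'} ≤ 1 + ∑ⱼ (|ξⱼ|^{pⱼ/pᵢ'} + |ζⱼ|^{pⱼ/pᵢ'})` by
subadditivity of `t ↦ t^{1/pᵢ'}`.
-/

open Function

namespace Real

lemma rpow_add_sum_le_add_sum_rpow {ι : Type*} (s : Finset ι) {x q : ℝ} {g : ι → ℝ}
    (hx : 0 ≤ x) (hg : ∀ j, 0 ≤ g j) (hq : 0 ≤ q) (hq1 : q ≤ 1) :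
    (x + ∑ j ∈ s, g j) ^ q ≤ x ^ q + ∑ j ∈ s, g j ^ q := by
  classical
  induction s using Finset.induction_on with
  | empty => simp
  | insert j s hj ih =>
    have hs : 0 ≤ x + ∑ i ∈ s, g i := add_nonneg hx (Finset.sum_nonneg fun i _ => hg i)
    calc (x + ∑ i ∈ insert j s, g i) ^ q = (x + ∑ i ∈ s, g i + g j) ^ q := by
          rw [Finset.sum_insert hj]; ring_nf
      _ ≤ (x + ∑ i ∈ s, g i) ^ q + g j ^ q := rpow_add_le_add_rpow hs (hg j) hq hq1
      _ ≤ x ^ q + ∑ i ∈ insert j s, g i ^ q := by rw [Finset.sum_insert hj]; linarith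

end Real

lemma le_one_add_sum_rpow_inv {ι : Type*} [Fintype ι] {p x y : ι → ℝ} (hx : ∀ j, 0 ≤ x j)
    (hy : ∀ j, 0 ≤ y j) (hp : ∀ j, 0 < p j) (j : ι) :
    x j ≤ (1 + ∑ i, (x i ^ p i + y i ^ p i)) ^ (p j)⁻¹ ∧
      y j ≤ (1 + ∑ i, (x i ^ p i + y i ^ p i)) ^ (p j)⁻¹ := by
  have hpow : ∀ i, 0 ≤ x i ^ p i ∧ 0 ≤ y i ^ p i := fun i =>
    ⟨Real.rpow_nonneg (hx i) _, Real.rpow_nonneg (hy i) _⟩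
  have hterm : x j ^ p j + y j ^ p j ≤ ∑ i, (x i ^ p i + y i ^ p i) :=
    Finset.single_le_sum (f := fun i => x i ^ p i + y i ^ p i)
      (fun i _ => add_nonneg (hpow i).1 (hpow i).2) (Finset.mem_univ j)
  have hR : 0 ≤ 1 + ∑ i, (x i ^ p i + y i ^ p i) := by linarith [hpow j]
  constructor
  · exact (Real.le_rpow_inv_iff_of_pos (hx j) hR (hp j)).2 (by linarith [hpow j])
  · exact (Real.le_rpow_inv_iff_of_pos (hy j) hR (hp j)).2 (by linarith [hpow j])

lemma one_add_sum_rpow_le_mul {ι : Type*} [Fintype ι] {p y : ι → ℝ} {c R : ℝ}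
    (hp : ∀ j, 0 < p j) (hc : 0 ≤ c) (hR : 1 ≤ R) (hy : ∀ j, 0 ≤ y j)
    (hyR : ∀ j, y j ≤ c * R ^ (p j)⁻¹) :
    1 + ∑ j, y j ^ p j ≤ (1 + ∑ j, c ^ p j) * R := by
  have h : ∀ j, y j ^ p j ≤ c ^ p j * R := fun j =>
    calc y j ^ p j ≤ (c * R ^ (p j)⁻¹) ^ p j := Real.rpow_le_rpow (hy j) (hyR j) (hp j).le
      _ = c ^ p j * R := by
        rw [Real.mul_rpow hc (by positivity), Real.rpow_inv_rpow (by linarith) (hp j).ne']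
  have hsum : 0 ≤ ∑ j, c ^ p j := Finset.sum_nonneg fun j _ => Real.rpow_nonneg hc (p j)
  calc 1 + ∑ j, y j ^ p j ≤ 1 + (∑ j, c ^ p j) * R := by
        rw [Finset.sum_mul]; gcongr with j; exact h j
    _ ≤ (1 + ∑ j, c ^ p j) * R := by nlinarith

lemma one_add_sum_div_rpow_inv_le {ι : Type*} [Fintype ι] {P x y : ι → ℝ} {p : ℝ}
    (hx : ∀ j, 0 ≤ x j) (hy : ∀ j, 0 ≤ y j) (hp : 1 ≤ p) :
    (1 + ∑ j, (x j ^ P j + y j ^ P j)) / (1 + ∑ j, (x j ^ P j + y j ^ P j)) ^ p⁻¹ ≤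
      1 + ∑ j, (x j ^ (P j * (p - 1) / p) + y j ^ (P j * (p - 1) / p)) := by
  set R := 1 + ∑ j, (x j ^ P j + y j ^ P j)
  have hθ0 : 0 ≤ (p - 1) / p := div_nonneg (by linarith) (by linarith)
  have hθ1 : (p - 1) / p ≤ 1 := (div_le_one (by linarith)).2 (by linarith)
  have hR : 0 < R := add_pos_of_pos_of_nonneg one_pos <| Finset.sum_nonneg fun j _ =>
    add_nonneg (Real.rpow_nonneg (hx j) _) (Real.rpow_nonneg (hy j) _)
  calc R / R ^ p⁻¹ = R ^ ((p - 1) / p) := by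
        rw [show (p - 1) / p = 1 - p⁻¹ by field_simp, Real.rpow_sub hR, Real.rpow_one]
    _ ≤ 1 + ∑ j, (x j ^ P j + y j ^ P j) ^ ((p - 1) / p) := by
        simpa using Real.rpow_add_sum_le_add_sum_rpow Finset.univ zero_le_one
          (fun j => add_nonneg (Real.rpow_nonneg (hx j) _) (Real.rpow_nonneg (hy j) _)) hθ0 hθ1
    _ ≤ 1 + ∑ j, ((x j ^ P j) ^ ((p - 1) / p) + (y j ^ P j) ^ ((p - 1) / p)) := by
        gcongr with j
        exact Real.rpow_add_le_add_rpow (Real.rpow_nonneg (hx j) _) (Real.rpow_nonneg (hy j) _)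
          hθ0 hθ1
    _ = 1 + ∑ j, (x j ^ (P j * (p - 1) / p) + y j ^ (P j * (p - 1) / p)) := by
        simp only [← Real.rpow_mul (hx _), ← Real.rpow_mul (hy _), mul_div_assoc]

section EuclideanNorm

variable {n k : ℕ}

lemma nL_nonneg (x : Lam n k) : 0 ≤ nL x := Real.sqrt_nonneg _

lemma sq_nL (x : Lam n k) : nL x ^ 2 = ∑ S, x S ^ 2 := Real.sq_sqrt (by positivity)

lemma abs_apply_le_nL (x : Lam n k) (S : IdxSet n k) : |x S| ≤ nL x :=
  Real.abs_le_sqrt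
    (Finset.single_le_sum (f := fun S => x S ^ 2) (fun _ _ => sq_nonneg _) (Finset.mem_univ S))

lemma nL_update_le (x : Lam n k) (S : IdxSet n k) (u : ℝ) :
    nL (update x S u) ≤ nL x + |u| := by
  have hsum : ∑ S', update x S u S' ^ 2 ≤ ∑ S', x S' ^ 2 + u ^ 2 :=
    calc ∑ S', update x S u S' ^ 2 ≤ ∑ S', (x S' ^ 2 + if S' = S then u ^ 2 else 0) := by
          gcongr with S'
          rcases eq_or_ne S' S with rfl | h
          · simp [sq_nonneg]
          · simp [h]
      _ = ∑ S', x S' ^ 2 + u ^ 2 := by rw [Finset.sum_add_distrib, Finset.sum_ite_eq']; simp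
  refine Real.sqrt_le_iff.2 ⟨add_nonneg (nL_nonneg x) (abs_nonneg u), ?_⟩
  nlinarith [sq_nL x, sq_abs u, mul_nonneg (nL_nonneg x) (abs_nonneg u)]

lemma nL_le_add_of_forall_eq_or_eq {x y z : Lam n k} (h : ∀ S, x S = y S ∨ x S = z S) :
    nL x ≤ nL y + nL z := by
  have hsum : ∑ S, x S ^ 2 ≤ ∑ S, y S ^ 2 + ∑ S, z S ^ 2 := by
    rw [← Finset.sum_add_distrib]
    gcongr with S
    rcases h S with h | h <;> rw [h] <;> nlinarith [sq_nonneg (y S), sq_nonneg (z S)]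
  refine Real.sqrt_le_iff.2 ⟨add_nonneg (nL_nonneg y) (nL_nonneg z), ?_⟩
  nlinarith [sq_nL y, sq_nL z, mul_nonneg (nL_nonneg y) (nL_nonneg z)]

lemma sum_abs_le_card_mul_nL (x : Lam n k) :
    ∑ S, |x S| ≤ Fintype.card (IdxSet n k) * nL x := by
  simpa using Finset.sum_le_sum fun S (_ : S ∈ Finset.univ) => abs_apply_le_nL x S

lemma nL_update_le_of_forall_eq_or_eq {m : ℕ} {d : Fin m → ℕ}
    {ξ ζ η : (i : Fin m) → Lam n (d i)} {r : Fin m → ℝ} (hξ : ∀ j, nL (ξ j) ≤ r j)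
    (hζ : ∀ j, nL (ζ j) ≤ r j) (hη : ∀ i S, η i S = ξ i S ∨ η i S = ζ i S)
    {i : Fin m} {S : IdxSet n (d i)} {u : ℝ} (hu : |u| ≤ 3 * r i) (j : Fin m) :
    nL (update η i (update (η i) S u) j) ≤ 5 * r j := by
  have hη_le : nL (η j) ≤ 2 * r j :=
    (nL_le_add_of_forall_eq_or_eq (hη j)).trans (by linarith [hξ j, hζ j])
  rcases eq_or_ne j i with rfl | hj
  · rw [update_self]; linarith [nL_update_le (η j) S u]
  · rw [update_of_ne hj]; linarith [nL_nonneg (ξ j), hξ j]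

end EuclideanNorm

lemma abs_sub_le_sum_of_forall_update {α β : Type*} [Fintype α] [DecidableEq α]
    (g : (α → β) → ℝ) (ξ ζ : α → β) (c : α → ℝ)
    (hc : ∀ x : α → β, (∀ a, x a = ξ a ∨ x a = ζ a) → ∀ a,
      |g (update x a (ξ a)) - g (update x a (ζ a))| ≤ c a) :
    |g ξ - g ζ| ≤ ∑ a, c a := by
  suffices h : ∀ s : Finset α, |g (s.piecewise ξ ζ) - g ζ| ≤ ∑ a ∈ s, c a by
    simpa using h Finset.univ
  intro s
  induction s using Finset.induction_on with
  | empty => simp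
  | insert a s ha ih =>
    have hstep := hc (s.piecewise ξ ζ) (fun b => by by_cases hb : b ∈ s <;> simp [hb]) a
    rw [← Finset.piecewise_insert, update_eq_self_iff.2 (s.piecewise_eq_of_notMem ξ ζ ha).symm]
      at hstep
    rw [Finset.sum_insert ha]
    exact (abs_sub_le _ _ _).trans (add_le_add hstep ih)

lemma SepConvex.abs_sub_le_of_abs_update_le {n m : ℕ} {d : Fin m → ℕ}
    {f : ((i : Fin m) → Lam n (d i)) → ℝ} (hf : SepConvex f) (ξ ζ : (i : Fin m) → Lam n (d i))
    {M : ℝ} {r : Fin m → ℝ}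
    (hr : ∀ i, 0 < r i) (hξ : ∀ i S, |ξ i S| < 2 * r i) (hζ : ∀ i S, |ζ i S| < 2 * r i)
    (hM : ∀ η : (i : Fin m) → Lam n (d i), (∀ i S, η i S = ξ i S ∨ η i S = ζ i S) →
      ∀ i S u, |u| < 3 * r i → |f (update η i (update (η i) S u))| ≤ M) :
    |f ξ - f ζ| ≤ ∑ i, 2 * M / r i * ∑ S, |ξ i S - ζ i S| := by
  classical
  simp only [Finset.mul_sum]
  rw [← Fintype.sum_sigma' (fun i S => 2 * M / r i * |ξ i S - ζ i S|)]
  refine abs_sub_le_sum_of_forall_update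
    (fun x : (Σ i, IdxSet n (d i)) → ℝ => f (Sigma.curry x)) (Sigma.uncurry ξ) (Sigma.uncurry ζ)
    _ fun x hx ⟨i, S⟩ => ?_
  simp only [Sigma.curry_update, Sigma.uncurry]
  set η : (i : Fin m) → Lam n (d i) := Sigma.curry x
  have hη : ∀ i S, η i S = ξ i S ∨ η i S = ζ i S := fun i S => hx ⟨i, S⟩
  have hM0 : 0 ≤ M := (abs_nonneg _).trans (hM η hη i S 0 (by simpa using hr i))
  have hconv :
      ConvexOn ℝ (Metric.ball 0 (3 * r i)) fun t => f (update η i (update (η i) S t)) :=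
    (hf η i S).subset (Set.subset_univ _) (convex_ball _ _)
  have hlip := hconv.lipschitzOnWith_of_abs_le (hr i)
    fun u hu => hM η hη i S u (by simpa using hu)
  have hball : ∀ t, |t| < 2 * r i → t ∈ Metric.ball (0 : ℝ) (3 * r i - r i) :=
    fun t ht => by rw [Metric.mem_ball, Real.dist_0_eq_abs]; linarith
  have hK : 0 ≤ 2 * M / r i := div_nonneg (mul_nonneg zero_le_two hM0) (hr i).le
  simpa [Real.dist_eq, Real.coe_toNNReal _ hK]
    using hlip.dist_le_mul _ (hball _ (hξ i S)) _ (hball _ (hζ i S))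

lemma SepConvex.abs_sub_le_of_growth {n m : ℕ} {d : Fin m → ℕ}
    {f : ((i : Fin m) → Lam n (d i)) → ℝ} (hf : SepConvex f) {p : Fin m → ℝ}
    (hp : ∀ i, 0 < p i) {a : ℝ} (ha : 0 ≤ a)
    (hgrowth : ∀ ξ, |f ξ| ≤ a * (1 + ∑ i, nL (ξ i) ^ p i))
    (ξ ζ : (i : Fin m) → Lam n (d i)) :
    |f ξ - f ζ| ≤ ∑ i, 2 * a * (1 + ∑ j, (5 : ℝ) ^ p j) *
      ((1 + ∑ j, (nL (ξ j) ^ p j + nL (ζ j) ^ p j)) /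
        (1 + ∑ j, (nL (ξ j) ^ p j + nL (ζ j) ^ p j)) ^ (p i)⁻¹) * ∑ S, |ξ i S - ζ i S| := by
  set B := ∑ j, (5 : ℝ) ^ p j
  set R := 1 + ∑ j, (nL (ξ j) ^ p j + nL (ζ j) ^ p j)
  set r : Fin m → ℝ := fun i => R ^ (p i)⁻¹
  obtain ⟨hξr, hζr⟩ := forall_and.1 fun j =>
    le_one_add_sum_rpow_inv (fun j => nL_nonneg (ξ j)) (fun j => nL_nonneg (ζ j)) hp j
  have hR : 1 ≤ R := le_add_of_nonneg_right <| Finset.sum_nonneg fun j _ =>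
    add_nonneg (Real.rpow_nonneg (nL_nonneg _) _) (Real.rpow_nonneg (nL_nonneg _) _)
  have hr : ∀ i, 0 < r i := fun i => Real.rpow_pos_of_pos (by linarith) _
  have hM : ∀ η : (i : Fin m) → Lam n (d i), (∀ i S, η i S = ξ i S ∨ η i S = ζ i S) →
      ∀ i S u, |u| < 3 * r i → |f (update η i (update (η i) S u))| ≤ a * ((1 + B) * R) :=
    fun η hη i S u hu => (hgrowth _).trans <| mul_le_mul_of_nonneg_left
      (one_add_sum_rpow_le_mul hp (by norm_num) hR (fun j => nL_nonneg _)
        (nL_update_le_of_forall_eq_or_eq hξr hζr hη hu.le)) ha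
  calc |f ξ - f ζ| ≤ ∑ i, 2 * (a * ((1 + B) * R)) / r i * ∑ S, |ξ i S - ζ i S| :=
        hf.abs_sub_le_of_abs_update_le ξ ζ hr
          (fun i S => by linarith [abs_apply_le_nL (ξ i) S, hξr i, hr i])
          (fun i S => by linarith [abs_apply_le_nL (ζ i) S, hζr i, hr i]) hM
    _ = _ := Finset.sum_congr rfl fun i _ => by ring

theorem stmt6_general {n m : ℕ} (k : Fin m → ℕ) (hk : ∀ i, k i + 1 ≤ n)
    (p : Fin m → ℝ) (hp : ∀ i, 1 ≤ p i)
    (f : ((i : Fin m) → Lam n (k i + 1)) → ℝ) (hsep : SepConvex f)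
    (a : ℝ) (ha : 0 < a)
    (hgrowth : ∀ ξ, |f ξ| ≤ a * (1 + ∑ i, nL (ξ i) ^ p i)) :
    ∃ β : Fin m → ℝ, (∀ i, 0 < β i) ∧ ∀ ξ ζ,
      |f ξ - f ζ| ≤ ∑ i, β i *
        (1 + ∑ j, (nL (ξ j) ^ (p j * (p i - 1) / p i) + nL (ζ j) ^ (p j * (p i - 1) / p i))) *
        nL (ξ i - ζ i) := by
  have hp0 : ∀ i, 0 < p i := fun i => one_pos.trans_le (hp i)
  refine ⟨fun i => 2 * a * (1 + ∑ j, (5 : ℝ) ^ p j) * Fintype.card (IdxSet n (k i + 1)),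
    fun i => ?_, fun ξ ζ => (hsep.abs_sub_le_of_growth hp0 ha.le hgrowth ξ ζ).trans <|
      Finset.sum_le_sum fun i _ => ?_⟩
  · have : 0 < Fintype.card (IdxSet n (k i + 1)) := by
      rw [Fintype.card_finset_len, Fintype.card_fin]; exact Nat.choose_pos (hk i)
    positivity
  -- for the nonnegativity side goal of `gcongr` below
  have hS :
      0 ≤ ∑ j, (nL (ξ j) ^ (p j * (p i - 1) / p i) + nL (ζ j) ^ (p j * (p i - 1) / p i)) :=
    Finset.sum_nonneg fun j _ =>
      add_nonneg (Real.rpow_nonneg (nL_nonneg _) _) (Real.rpow_nonneg (nL_nonneg _) _)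
  calc _ ≤ 2 * a * (1 + ∑ j, (5 : ℝ) ^ p j) *
        (1 + ∑ j, (nL (ξ j) ^ (p j * (p i - 1) / p i) + nL (ζ j) ^ (p j * (p i - 1) / p i))) *
        (Fintype.card (IdxSet n (k i + 1)) * nL (ξ i - ζ i)) := by
        gcongr
        · exact one_add_sum_div_rpow_inv_le (fun j => nL_nonneg (ξ j)) (fun j => nL_nonneg (ζ j))
            (hp i)
        · exact sum_abs_le_card_mul_nL (ξ i - ζ i)
    _ = _ := by ring

/-- A separately convex function with `|f(ξ)| ≤ α(1 + Σ|ξ_i|^{p_i})`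
satisfies the Lipschitz-type estimate with exponents `p_j/p_i'`. -/
theorem stmt6 {n m : ℕ} (hm : 1 ≤ m) (k : Fin m → ℕ) (hk : ∀ i, k i + 1 ≤ n)
    (p : Fin m → ℝ) (hp : ∀ i, 1 ≤ p i)
    (f : ((i : Fin m) → Lam n (k i + 1)) → ℝ) (hsep : SepConvex f)
    (a : ℝ) (ha : 0 < a)
    (hgrowth : ∀ ξ, |f ξ| ≤ a * (1 + ∑ i, nL (ξ i) ^ p i)) :
    ∃ β : Fin m → ℝ, (∀ i, 0 < β i) ∧ ∀ ξ ζ,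
      |f ξ - f ζ| ≤ ∑ i, β i *
        (1 + ∑ j, (nL (ξ j) ^ (p j * (p i - 1) / p i) + nL (ζ j) ^ (p j * (p i - 1) / p i))) *
        nL (ξ i - ζ i) :=
  stmt6_general k hk p hp f hsep a ha hgrowth
end
end
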